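/- Let α, β, s ∈ ℂ with α+β ≠ 0, and suppose that none of the numbers (−s+1/2+α)/2, (−s+1/2+β)/2, (s+1/2−α)/2, (s+1/2−β)/2, (α+β)/2 − s is a nonpositive integer. Then H(1/2−β+s, 1−α−β+2s) · Ṽ_{α,β}(−s) = Ṽ_{−β,−α}(s) · √π · Γ((α+β)/2 − s) / Γ((1−α−β)/2 + s), where the quotient of Gamma functions is interpreted via the reciprocal Gamma function. -/
import Mathlib


open Complex

/-- `Vt α β s` is `Ṽ_{α,β}(s)`. -/
noncomputable def Vt (α β s : ℂ) : ℂ :=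
  Complex.Gamma ((s + 1/2 + α) / 2) * Complex.Gamma ((s + 1/2 + β) / 2) *
    (1 - (2 * s / (α + β)) ^ 2)

/-- `H(w,z) = √π · Γ((1−z)/2) Γ(w/2) Γ((z−w)/2) / ( Γ(z/2) Γ((1−w)/2) Γ((1−z+w)/2) )`,
the quotient being interpreted via the reciprocal Gamma function (note that Mathlib's
`Complex.Gamma` vanishes at the poles). -/
noncomputable def Hfun (w z : ℂ) : ℂ :=
  (Real.sqrt Real.pi : ℂ) * Complex.Gamma ((1 - z) / 2) * Complex.Gamma (w / 2) *
    Complex.Gamma ((z - w) / 2) /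
    (Complex.Gamma (z / 2) * Complex.Gamma ((1 - w) / 2) * Complex.Gamma ((1 - z + w) / 2))

theorem statement18 (α β s : ℂ) (hab : α + β ≠ 0)
    (h1 : ∀ n : ℕ, (-s + 1/2 + α) / 2 ≠ -(n : ℂ))
    (h2 : ∀ n : ℕ, (-s + 1/2 + β) / 2 ≠ -(n : ℂ))
    (h3 : ∀ n : ℕ, (s + 1/2 - α) / 2 ≠ -(n : ℂ))
    (h4 : ∀ n : ℕ, (s + 1/2 - β) / 2 ≠ -(n : ℂ))
    (h5 : ∀ n : ℕ, (α + β) / 2 - s ≠ -(n : ℂ)) :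
    Hfun (1/2 - β + s) (1 - α - β + 2 * s) * Vt α β (-s) =
      Vt (-β) (-α) s * (Real.sqrt Real.pi : ℂ) *
        Complex.Gamma ((α + β) / 2 - s) / Complex.Gamma ((1 - α - β) / 2 + s) := by
  have hE : Complex.Gamma ((-s + 1/2 + α) / 2) ≠ 0 := Complex.Gamma_ne_zero h1
  have hF : Complex.Gamma ((-s + 1/2 + β) / 2) ≠ 0 := Complex.Gamma_ne_zero h2
  unfold Hfun Vt
  rw [show (1 - (1 - α - β + 2 * s)) / 2 = (α + β) / 2 - s by ring,
    show (1/2 - β + s) / 2 = (s + 1/2 + -β) / 2 by ring,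
    show ((1 - α - β + 2 * s) - (1/2 - β + s)) / 2 = (s + 1/2 + -α) / 2 by ring,
    show (1 - α - β + 2 * s) / 2 = (1 - α - β) / 2 + s by ring,
    show (1 - (1/2 - β + s)) / 2 = (-s + 1/2 + β) / 2 by ring,
    show (1 - (1 - α - β + 2 * s) + (1/2 - β + s)) / 2 = (-s + 1/2 + α) / 2 by ring]
  have hq : (1 - (2 * s / (-β + -α)) ^ 2) = (1 - (2 * -s / (α + β)) ^ 2) := by
    rw [show -β + -α = -(α + β) by ring, div_neg]
    ring
  rw [hq]
  set A := Complex.Gamma ((α + β) / 2 - s)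
  set B := Complex.Gamma ((s + 1/2 + -β) / 2)
  set C := Complex.Gamma ((s + 1/2 + -α) / 2)
  set D := Complex.Gamma ((1 - α - β) / 2 + s)
  set E := Complex.Gamma ((-s + 1/2 + α) / 2)
  set F := Complex.Gamma ((-s + 1/2 + β) / 2)
  set q := (1 - (2 * -s / (α + β)) ^ 2)
  have hEF : E * F ≠ 0 := mul_ne_zero hE hF
  calc (Real.sqrt Real.pi : ℂ) * A * B * C / (D * F * E) * (E * F * q)
      = (B * C * q * (Real.sqrt Real.pi : ℂ) * A) * (E * F) / (D * (E * F)) := by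
        ring
    _ = B * C * q * (Real.sqrt Real.pi : ℂ) * A / D := mul_div_mul_right _ D hEF
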